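/- Let Φ : M_n(ℂ) → M_n(ℂ) be a unital completely positive trace-preserving map whose range is contained in S_n = {X : X_{ii} = X_{jj} for all i,j}, and which additionally satisfies Φ(E_{ii}) = (1/n)I_n for all i and Φ(E_{ij}) = c_{ij}E_{ij} for i ≠ j. Then |c_{ij}| ≤ 1/n for all i ≠ j. -/

import Mathlib

open Matrix
open scoped ComplexOrder

/-- The Choi matrix of a map of matrices: `Ch(Φ) = Σ_{i,j} E_ij ⊗ Φ(E_ij)`. -/
def choiMatrix {n : ℕ} (Φ : Matrix (Fin n) (Fin n) ℂ → Matrix (Fin n) (Fin n) ℂ) :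
    Matrix (Fin n × Fin n) (Fin n × Fin n) ℂ :=
  Matrix.of fun p q => (Φ (single p.1 q.1 1)) p.2 q.2

/-!
The Choi matrix of `Φ` is positive semidefinite, so its principal `2 × 2` submatrix on the
indices `(i, i), (j, j)`, which by the hypotheses on `Φ` is `!![1/n, c i j; conj (c i j), 1/n]`,
has nonnegative determinant; that is, `‖c i j‖ ^ 2 ≤ 1 / n ^ 2`.
-/

theorem Matrix.PosSemidef.norm_apply_sq_le {ι 𝕜 : Type*} [Fintype ι] [RCLike 𝕜]
    {A : Matrix ι ι 𝕜} (hA : A.PosSemidef) (i j : ι) :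
    ‖A i j‖ ^ 2 ≤ RCLike.re (A i i) * RCLike.re (A j j) := by
  have hdet := (hA.submatrix ![i, j]).det_nonneg
  rw [det_fin_two] at hdet
  simp only [submatrix_apply, cons_val_zero, cons_val_one] at hdet
  rw [← hA.1.apply j i, RCLike.star_def, RCLike.mul_conj] at hdet
  have hii := RCLike.nonneg_iff.mp (hA.diag_nonneg (i := i))
  have hjj := RCLike.nonneg_iff.mp (hA.diag_nonneg (i := j))
  have hre := (RCLike.nonneg_iff.mp hdet).1
  simp only [map_sub, RCLike.mul_re, hii.2, hjj.2, mul_zero, sub_zero,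
    RCLike.re_ofReal_pow] at hre
  linarith

theorem offdiag_coeff_le_general {n : ℕ}
    (Φ : Matrix (Fin n) (Fin n) ℂ →ₗ[ℂ] Matrix (Fin n) (Fin n) ℂ)
    (c : Fin n → Fin n → ℂ)
    (hcp : (choiMatrix ⇑Φ).PosSemidef)
    (hdiag : ∀ i, Φ (single i i 1) = (n : ℂ)⁻¹ • (1 : Matrix (Fin n) (Fin n) ℂ))
    (hoff : ∀ i j, i ≠ j → Φ (single i j 1) = c i j • single i j (1 : ℂ)) :
    ∀ i j, i ≠ j → ‖c i j‖ ≤ (n : ℝ)⁻¹ := by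
  intro i j hij
  have hchoi_diag (k : Fin n) : RCLike.re (choiMatrix Φ (k, k) (k, k)) = (n : ℝ)⁻¹ := by
    simp [choiMatrix, hdiag]
  have hchoi_off : choiMatrix Φ (i, i) (j, j) = c i j := by
    simp [choiMatrix, hoff i j hij]
  have h := hcp.norm_apply_sq_le (i, i) (j, j)
  rw [hchoi_off, hchoi_diag, hchoi_diag, ← sq] at h
  exact (pow_le_pow_iff_left₀ (norm_nonneg _) (by positivity) two_ne_zero).mp h

theorem offdiag_coeff_le {n : ℕ} (hn : 0 < n)
    (Φ : Matrix (Fin n) (Fin n) ℂ →ₗ[ℂ] Matrix (Fin n) (Fin n) ℂ)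
    (c : Fin n → Fin n → ℂ)
    (hunital : Φ 1 = 1)
    (htrace : ∀ A, (Φ A).trace = A.trace)
    (hcp : (choiMatrix ⇑Φ).PosSemidef)
    (hrange : ∀ A, ∀ i j, (Φ A) i i = (Φ A) j j)
    (hdiag : ∀ i, Φ (single i i 1) = (n : ℂ)⁻¹ • (1 : Matrix (Fin n) (Fin n) ℂ))
    (hoff : ∀ i j, i ≠ j → Φ (single i j 1) = c i j • single i j (1 : ℂ)) :
    ∀ i j, i ≠ j → ‖c i j‖ ≤ (n : ℝ)⁻¹ :=
  offdiag_coeff_le_general Φ c hcp hdiag hoff
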